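/- Let t ≥ 2 be an integer and, for each i ∈ {1,…,t}, let G_i be a finite simple graph that is a minimal (1,k_i)-polar obstruction and is (1,k_i+1)-polar. Then, setting k = t − 1 + (k_1 + ⋯ + k_t), the disjoint union G = G_1 + ⋯ + G_t is a minimal (1,k)-polar obstruction that is (1,k+1)-polar. -/

import Mathlib

open SimpleGraph

universe u v

/-! ### Basic predicates -/

/-- `B` induces a disjoint union of complete graphs in `G` (i.e. `G[B]` is a cluster). -/
def IsClusterSet {V : Type*} (G : SimpleGraph V) (B : Set V) : Prop :=
  ∀ ⦃u w x : V⦄, u ∈ B → w ∈ B → x ∈ B → G.Adj u w → G.Adj w x → u ≠ x → G.Adj u x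

/-- `A` induces a complete multipartite graph in `G`
(the complement of `G[A]` is a disjoint union of cliques). -/
def IsCompleteMultipartiteSet {V : Type*} (G : SimpleGraph V) (A : Set V) : Prop :=
  ∀ ⦃u w x : V⦄, u ∈ A → w ∈ A → x ∈ A → u ≠ w → w ≠ x → u ≠ x →
    ¬ G.Adj u w → ¬ G.Adj w x → ¬ G.Adj u x

/-- `A` is an independent set of `G`. -/
def IsIndepSet {V : Type*} (G : SimpleGraph V) (A : Set V) : Prop :=
  ∀ ⦃u w : V⦄, u ∈ A → w ∈ A → ¬ G.Adj u w

/-- `G[B]` is a disjoint union of at most `k` complete graphs. -/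
def IsClusterSetLE {V : Type*} (G : SimpleGraph V) (k : ℕ) (B : Set V) : Prop :=
  ∃ g : B → Fin k, ∀ u w : B, u ≠ w → (G.Adj u w ↔ g u = g w)

/-- `G[A]` is a complete multipartite graph with at most `s` parts. -/
def IsCompleteMultipartiteSetLE {V : Type*} (G : SimpleGraph V) (s : ℕ) (A : Set V) : Prop :=
  ∃ f : A → Fin s, ∀ u w : A, G.Adj u w ↔ f u ≠ f w

/-! ### Polarity properties -/

/-- `G` is unipolar: a partition `(A, Aᶜ)` with `A` a clique and `G[Aᶜ]` a cluster. -/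
def Unipolar {V : Type*} (G : SimpleGraph V) : Prop :=
  ∃ A : Set V, G.IsClique A ∧ IsClusterSet G Aᶜ

/-- `G` is monopolar ((1,∞)-polar). -/
def Monopolar {V : Type*} (G : SimpleGraph V) : Prop :=
  ∃ A : Set V, _root_.IsIndepSet G A ∧ IsClusterSet G Aᶜ

/-- `G` is polar ((∞,∞)-polar). -/
def Polar {V : Type*} (G : SimpleGraph V) : Prop :=
  ∃ A : Set V, IsCompleteMultipartiteSet G A ∧ IsClusterSet G Aᶜ

/-- `G` is (s,1)-polar. -/
def SOnePolar {V : Type*} (s : ℕ) (G : SimpleGraph V) : Prop :=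
  ∃ A : Set V, IsCompleteMultipartiteSetLE G s A ∧ G.IsClique Aᶜ

/-- `G` is (∞,1)-polar. -/
def InfOnePolar {V : Type*} (G : SimpleGraph V) : Prop :=
  ∃ A : Set V, IsCompleteMultipartiteSet G A ∧ G.IsClique Aᶜ

/-- `G` is (1,k)-polar. -/
def OneKPolar {V : Type*} (k : ℕ) (G : SimpleGraph V) : Prop :=
  ∃ A : Set V, _root_.IsIndepSet G A ∧ IsClusterSetLE G k Aᶜ

/-! ### Minimal obstructions -/

def MinUnipolarObstruction {V : Type*} (G : SimpleGraph V) : Prop :=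
  ¬ Unipolar G ∧ ∀ s : Set V, s ≠ Set.univ → Unipolar (G.induce s)

def MinMonopolarObstruction {V : Type*} (G : SimpleGraph V) : Prop :=
  ¬ Monopolar G ∧ ∀ s : Set V, s ≠ Set.univ → Monopolar (G.induce s)

def MinPolarObstruction {V : Type*} (G : SimpleGraph V) : Prop :=
  ¬ Polar G ∧ ∀ s : Set V, s ≠ Set.univ → Polar (G.induce s)

def MinSOnePolarObstruction {V : Type*} (s : ℕ) (G : SimpleGraph V) : Prop :=
  ¬ SOnePolar s G ∧ ∀ t : Set V, t ≠ Set.univ → SOnePolar s (G.induce t)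

def MinInfOnePolarObstruction {V : Type*} (G : SimpleGraph V) : Prop :=
  ¬ InfOnePolar G ∧ ∀ t : Set V, t ≠ Set.univ → InfOnePolar (G.induce t)

def MinOneKPolarObstruction {V : Type*} (k : ℕ) (G : SimpleGraph V) : Prop :=
  ¬ OneKPolar k G ∧ ∀ t : Set V, t ≠ Set.univ → OneKPolar k (G.induce t)

/-! ### Graph constructions -/

/-- The join of two graphs: all edges added between the summands. -/
def joinG {α β : Type*} (G : SimpleGraph α) (H : SimpleGraph β) : SimpleGraph (α ⊕ β) where
  Adj x y := (G ⊕g H).Adj x y ∨ (x.isLeft ∧ y.isRight) ∨ (x.isRight ∧ y.isLeft)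
  symm := ⟨fun x y h => by
    rcases h with h | ⟨h1, h2⟩ | ⟨h1, h2⟩
    · exact Or.inl ((G ⊕g H).adj_symm h)
    · exact Or.inr (Or.inr ⟨h2, h1⟩)
    · exact Or.inr (Or.inl ⟨h2, h1⟩)⟩
  loopless := ⟨fun x h => by
    rcases h with h | ⟨h1, h2⟩ | ⟨h1, h2⟩
    · exact (G ⊕g H).loopless.irrefl x h
    · cases x <;> simp_all
    · cases x <;> simp_all⟩

/-- `K_n`, the complete graph on `n` vertices. -/
def KG (n : ℕ) : SimpleGraph (Fin n) := ⊤

/-- `n K_1`, the edgeless graph on `n` vertices. -/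
def EG (n : ℕ) : SimpleGraph (Fin n) := ⊥

/-- The banner graph `P`: a four-cycle `0 1 2 3` with a pendant vertex `4` adjacent to `0`. -/
def banner : SimpleGraph (Fin 5) :=
  SimpleGraph.fromEdgeSet {s(0, 1), s(1, 2), s(2, 3), s(3, 0), s(0, 4)}

/-- The chair (fork) graph `F`: a path `0 1 2 3` with an extra vertex `4` adjacent to `1`. -/
def chair : SimpleGraph (Fin 5) :=
  SimpleGraph.fromEdgeSet {s(0, 1), s(1, 2), s(2, 3), s(1, 4)}

/-- `2P_3`. -/
def twoP3 : SimpleGraph (Fin 3 ⊕ Fin 3) := pathGraph 3 ⊕g pathGraph 3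

/-- `K_{2,3}`. -/
def K23 : SimpleGraph (Fin 2 ⊕ Fin 3) := completeBipartiteGraph (Fin 2) (Fin 3)

/-- The seven graphs `E1, E2, E3, E7, E10, E11, E12`. -/
def E1 : SimpleGraph (Fin 1 ⊕ (Fin 2 ⊕ Fin 2)) := KG 1 ⊕g (KG 2 ⊕g KG 2)
def E2 : SimpleGraph (Fin 3 ⊕ Fin 3) := pathGraph 3 ⊕g pathGraph 3
def E3 : SimpleGraph (Fin 4 ⊕ Fin 2) := cycleGraph 4 ⊕g EG 2
def E7 : SimpleGraph (Fin 1 ⊕ (Fin 3 ⊕ Fin 2)) := KG 1 ⊕g (pathGraph 3 ⊕g KG 2)ᶜ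
def E10 : SimpleGraph (Fin 1 ⊕ Fin 5) := KG 1 ⊕g cycleGraph 5
def E11 : SimpleGraph (Fin 1 ⊕ Fin 5) := KG 1 ⊕g banner
def E12 : SimpleGraph (Fin 1 ⊕ Fin 5) := KG 1 ⊕g (pathGraph 5)ᶜ

/-! ### P4 structure -/

/-- `W` induces a path on four vertices in `G`. -/
def InducesP4 {V : Type*} (G : SimpleGraph V) (W : Set V) : Prop :=
  Nonempty (G.induce W ≃g pathGraph 4)

/-- A graph is a cograph if it has no induced `P_4`. -/
def Cograph {V : Type*} (G : SimpleGraph V) : Prop :=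
  ∀ W : Set V, ¬ InducesP4 G W

/-- `G` is `P_4`-sparse: any five vertices induce at most one `P_4`. -/
def P4Sparse {V : Type*} (G : SimpleGraph V) : Prop :=
  ∀ s : Set V, s.ncard = 5 → ∀ W₁ W₂ : Set V, W₁ ⊆ s → W₂ ⊆ s →
    InducesP4 G W₁ → InducesP4 G W₂ → W₁ = W₂

/-- `G` is `P_4`-extendible. -/
def P4Extendible {V : Type*} (G : SimpleGraph V) : Prop :=
  ∀ W : Set V, InducesP4 G W →
    ∀ v₁ v₂ : V, v₁ ∉ W → v₂ ∉ W →
      (∃ W₁ : Set V, InducesP4 G W₁ ∧ v₁ ∈ W₁ ∧ (W₁ ∩ W).Nonempty) →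
      (∃ W₂ : Set V, InducesP4 G W₂ ∧ v₂ ∈ W₂ ∧ (W₂ ∩ W).Nonempty) → v₁ = v₂

/-! ### Spiders -/

/-- `(S, K, R)` is a spider partition of `G`. -/
def IsSpiderPartition {V : Type*} (G : SimpleGraph V) (S K R : Set V) : Prop :=
  S ∪ K ∪ R = Set.univ ∧ Disjoint S K ∧ Disjoint S R ∧ Disjoint K R ∧
  S.ncard = K.ncard ∧ 2 ≤ K.ncard ∧
  G.IsClique K ∧ _root_.IsIndepSet G S ∧
  (∃ f : S → K, Function.Bijective f ∧
    ((∀ s : S, ∀ k : K, G.Adj s k ↔ (f s : V) = k) ∨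
     (∀ s : S, ∀ k : K, G.Adj s k ↔ (f s : V) ≠ k))) ∧
  (∀ r ∈ R, ∀ k ∈ K, G.Adj r k) ∧
  (∀ r ∈ R, ∀ s ∈ S, ¬ G.Adj r s)

/-- `G` is a `B`-spider with partition `(S, K, R)`, where `B` is a fixed base graph with
midpoint set `M` and endpoint set `E`: `G` is obtained from a copy of `B` (whose midpoints
form `K` and whose endpoints form `S`) by adding the set `R` of vertices, each adjacent to
all midpoints and to no endpoint. -/
def IsBaseSpider {n : ℕ} {V : Type*} (B : SimpleGraph (Fin n)) (M E : Set (Fin n))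
    (G : SimpleGraph V) (S K R : Set V) : Prop :=
  ∃ f : Fin n → V, Function.Injective f ∧
    (∀ i j : Fin n, G.Adj (f i) (f j) ↔ B.Adj i j) ∧
    K = f '' M ∧ S = f '' E ∧ R = (Set.range f)ᶜ ∧
    (∀ r ∈ R, ∀ x ∈ K, G.Adj r x) ∧
    (∀ r ∈ R, ∀ x ∈ S, ¬ G.Adj r x)

/-- Disjoint union of an indexed family of graphs. -/
def sigmaDisjUnion {ι : Type*} {V : ι → Type*} (G : ∀ i, SimpleGraph (V i)) :
    SimpleGraph (Σ i, V i) where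
  Adj x y := ∃ (i : ι) (a b : V i), (G i).Adj a b ∧ x = ⟨i, a⟩ ∧ y = ⟨i, b⟩
  symm := ⟨by
    rintro x y ⟨i, a, b, h, rfl, rfl⟩
    exact ⟨i, b, a, h.symm, rfl, rfl⟩⟩
  loopless := ⟨by
    rintro x ⟨i, a, b, h, rfl, h2⟩
    rw [Sigma.mk.inj_iff] at h2
    obtain ⟨-, h2⟩ := h2
    exact h.ne (eq_of_heq h2)⟩

open Finset

/-! The components of `G₁ + ⋯ + G_t` share no cluster, so a `(1,k)`-partition of the union
restricts to `(1,nᵢ)`-partitions of the components with `n₁ + ⋯ + n_t ≤ k`; as `Gᵢ` is not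
`(1,kᵢ)`-polar, `nᵢ ≥ kᵢ + 1`, which forces `k ≥ t + ∑ kᵢ`. Conversely, once a vertex of `G_{i₀}`
is deleted, that component needs only `k_{i₀}` clusters and the others `kᵢ + 1`, for
`t - 1 + ∑ kᵢ` in total. -/

lemma IsClusterSetLE.of_forall_mem {V α : Type*} {G : SimpleGraph V} {B : Set V}
    {S : Finset α} {n : ℕ} (hS : #S ≤ n) (g : B → α)
    (hg : ∀ u w : B, u ≠ w → (G.Adj u w ↔ g u = g w)) (hgS : ∀ x, g x ∈ S) :
    IsClusterSetLE G n B := by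
  let e : S ↪ Fin n := S.equivFin.toEmbedding.trans (Fin.castLEEmb hS)
  refine ⟨fun x => e ⟨g x, hgS x⟩, fun u w huw => (hg u w huw).trans ?_⟩
  exact ⟨fun h => by simp only [h], fun h => congrArg Subtype.val (e.injective h)⟩

namespace OneKPolar

variable {V W : Type*} {G : SimpleGraph V} {H : SimpleGraph W} {m n : ℕ}

lemma mono (hmn : m ≤ n) (h : OneKPolar m G) : OneKPolar n G := by
  obtain ⟨A, hA, g, hg⟩ := h
  exact ⟨A, hA, IsClusterSetLE.of_forall_mem (by simpa using hmn) g hg fun _ => mem_univ _⟩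

lemma comap (f : G ↪g H) (h : OneKPolar m H) : OneKPolar m G := by
  obtain ⟨A, hA, g, hg⟩ := h
  refine ⟨f ⁻¹' A, fun u w hu hw huw => hA hu hw (f.map_adj_iff.2 huw), ?_⟩
  refine IsClusterSetLE.of_forall_mem (card_fin m).le (fun x => g ⟨f x, x.2⟩) ?_ fun _ => mem_univ _
  intro u w huw
  rw [← f.map_adj_iff]
  exact hg ⟨f u, u.2⟩ ⟨f w, w.2⟩ fun h => huw (Subtype.ext (f.injective (congrArg Subtype.val h)))

end OneKPolar

section SigmaDisjUnion

variable {ι : Type*} {V : ι → Type*} {G : ∀ i, SimpleGraph (V i)}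

lemma sigmaDisjUnion_adj_mk {i : ι} {a b : V i} :
    (sigmaDisjUnion G).Adj ⟨i, a⟩ ⟨i, b⟩ ↔ (G i).Adj a b := by
  refine ⟨?_, fun h => ⟨i, a, b, h, rfl, rfl⟩⟩
  rintro ⟨j, c, d, h, hac, hbd⟩
  obtain ⟨rfl, hac⟩ := Sigma.mk.inj_iff.1 hac
  obtain ⟨-, hbd⟩ := Sigma.mk.inj_iff.1 hbd
  rwa [eq_of_heq hac, eq_of_heq hbd]

lemma sigmaDisjUnion_adj_fst_eq {x y : Σ i, V i} (h : (sigmaDisjUnion G).Adj x y) :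
    x.1 = y.1 := by
  obtain ⟨i, a, b, -, rfl, rfl⟩ := h
  rfl

variable (G) in
def sigmaDisjUnionInduceIso (s : Set (Σ i, V i)) :
    sigmaDisjUnion (fun i => (G i).induce (Sigma.mk i ⁻¹' s)) ≃g (sigmaDisjUnion G).induce s where
  toFun x := ⟨⟨x.1, x.2⟩, x.2.2⟩
  invFun y := ⟨y.1.1, ⟨y.1.2, y.2⟩⟩
  left_inv _ := rfl
  right_inv _ := rfl
  map_rel_iff' := by
    rintro ⟨i, a⟩ ⟨j, b⟩
    change (sigmaDisjUnion G).Adj ⟨i, a⟩ ⟨j, b⟩ ↔ _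
    rcases eq_or_ne i j with rfl | hij
    · rw [sigmaDisjUnion_adj_mk, sigmaDisjUnion_adj_mk]
      rfl
    · exact iff_of_false (fun h => hij (sigmaDisjUnion_adj_fst_eq h))
        fun h => hij (sigmaDisjUnion_adj_fst_eq h)

variable [Fintype ι]

lemma oneKPolar_sigmaDisjUnion {m : ι → ℕ} (h : ∀ i, OneKPolar (m i) (G i)) :
    OneKPolar (∑ i, m i) (sigmaDisjUnion G) := by
  choose A hA g hg using h
  refine ⟨{x | x.2 ∈ A x.1}, ?_, ?_⟩
  · rintro _ _ hu hw ⟨i, a, b, hab, rfl, rfl⟩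
    exact hA i hu hw hab
  refine IsClusterSetLE.of_forall_mem (S := (univ : Finset (Σ i, Fin (m i)))) (by simp)
    (fun x => ⟨x.1.1, g x.1.1 ⟨x.1.2, x.2⟩⟩) ?_ fun _ => mem_univ _
  rintro ⟨⟨i, a⟩, ha⟩ ⟨⟨j, b⟩, hb⟩ hne
  rcases eq_or_ne i j with rfl | hij
  · rw [sigmaDisjUnion_adj_mk, hg i ⟨a, ha⟩ ⟨b, hb⟩ fun h => hne (by cases h; rfl)]
    simp
  · exact iff_of_false (fun h => hij (sigmaDisjUnion_adj_fst_eq h))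
      fun h => hij (congrArg Sigma.fst h)

lemma exists_sum_le_of_oneKPolar_sigmaDisjUnion {m : ℕ} (h : OneKPolar m (sigmaDisjUnion G)) :
    ∃ n : ι → ℕ, (∀ i, OneKPolar (n i) (G i)) ∧ ∑ i, n i ≤ m := by
  classical
  obtain ⟨A, hA, g, hg⟩ := h
  let S : ι → Finset (Fin m) := fun i => {c | ∃ x : ↥Aᶜ, x.1.1 = i ∧ g x = c}
  have hS : ((univ : Finset ι) : Set ι).PairwiseDisjoint S := by
    intro i _ j _ hij
    refine Finset.disjoint_left.2 fun c hi hj => ?_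
    obtain ⟨x, rfl, rfl⟩ := (mem_filter.1 hi).2
    obtain ⟨y, rfl, hyx⟩ := (mem_filter.1 hj).2
    have hxy : x ≠ y := fun h => hij (by rw [h])
    exact hij (sigmaDisjUnion_adj_fst_eq ((hg x y hxy).2 hyx.symm))
  refine ⟨fun i => #(S i), fun i => ⟨Sigma.mk i ⁻¹' A,
    fun u w hu hw huw => hA hu hw (sigmaDisjUnion_adj_mk.2 huw), ?_⟩, ?_⟩
  · refine IsClusterSetLE.of_forall_mem le_rfl (fun v => g ⟨⟨i, v⟩, v.2⟩) ?_
      fun v => mem_filter.2 ⟨mem_univ _, _, rfl, rfl⟩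
    intro u w huw
    rw [← sigmaDisjUnion_adj_mk]
    exact hg ⟨⟨i, u⟩, u.2⟩ ⟨⟨i, w⟩, w.2⟩ fun h =>
      huw (Subtype.ext (eq_of_heq (Sigma.mk.inj_iff.1 (congrArg Subtype.val h)).2))
  · calc ∑ i, #(S i) = #(univ.biUnion S) := (card_biUnion hS).symm
      _ ≤ m := by simpa using card_le_univ (univ.biUnion S)

lemma not_oneKPolar_sigmaDisjUnion {k : ι → ℕ} (h : ∀ i, ¬ OneKPolar (k i) (G i)) {m : ℕ}
    (hm : m < ∑ i, (k i + 1)) : ¬ OneKPolar m (sigmaDisjUnion G) := by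
  intro hG
  obtain ⟨n, hn, hnm⟩ := exists_sum_le_of_oneKPolar_sigmaDisjUnion hG
  have hkn : ∀ i, k i + 1 ≤ n i := fun i => not_le.1 fun hle => h i ((hn i).mono (by omega))
  exact (hm.trans_le ((sum_le_sum fun i _ => hkn i).trans hnm)).false

lemma oneKPolar_induce_sigmaDisjUnion {k : ι → ℕ}
    (hmin : ∀ i, ∀ s : Set (V i), s ≠ Set.univ → OneKPolar (k i) ((G i).induce s))
    (hpol : ∀ i, OneKPolar (k i + 1) (G i)) {s : Set (Σ i, V i)} (hs : s ≠ Set.univ) {m : ℕ}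
    (hm : ∑ i, (k i + 1) ≤ m + 1) : OneKPolar m ((sigmaDisjUnion G).induce s) := by
  classical
  obtain ⟨⟨i₀, v₀⟩, hv₀⟩ := (Set.ne_univ_iff_exists_notMem s).1 hs
  let n := Function.update (fun i => k i + 1) i₀ (k i₀)
  have hn : ∀ i, OneKPolar (n i) ((G i).induce (Sigma.mk i ⁻¹' s)) := by
    intro i
    rcases eq_or_ne i i₀ with rfl | hi
    · simp only [n, Function.update_self]
      exact hmin i _ fun h => hv₀ (h.symm ▸ Set.mem_univ v₀ : v₀ ∈ Sigma.mk i ⁻¹' s)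
    · simp only [n, Function.update_of_ne hi]
      exact (hpol i).comap (Embedding.induce _)
  have hsum : ∑ i, n i + 1 = ∑ i, (k i + 1) := by
    rw [sum_update_of_mem (mem_univ i₀), sum_eq_add_sum_sdiff_singleton_of_mem (mem_univ i₀)]
    omega
  exact ((oneKPolar_sigmaDisjUnion hn).comap (sigmaDisjUnionInduceIso G s).symm.toEmbedding).mono
    (by omega)

end SigmaDisjUnion

theorem stmt_11_general (t : ℕ) (ht : 2 ≤ t) (V : Fin t → Type*)
    (G : ∀ i, SimpleGraph (V i)) (k : Fin t → ℕ)
    (hobs : ∀ i, MinOneKPolarObstruction (k i) (G i))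
    (hpol : ∀ i, OneKPolar (k i + 1) (G i)) :
    MinOneKPolarObstruction (t - 1 + ∑ i, k i) (sigmaDisjUnion G) ∧
      OneKPolar ((t - 1 + ∑ i, k i) + 1) (sigmaDisjUnion G) := by
  have hsum : ∑ i, (k i + 1) = ∑ i, k i + t := by simp [sum_add_distrib]
  refine ⟨⟨not_oneKPolar_sigmaDisjUnion (fun i => (hobs i).1) (by omega), fun s hs => ?_⟩, ?_⟩
  · exact oneKPolar_induce_sigmaDisjUnion (fun i => (hobs i).2) hpol hs (by omega)
  · exact (oneKPolar_sigmaDisjUnion hpol).mono (by omega)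

/-- If each `G i` is a minimal `(1, k i)`-polar obstruction which is
`(1, k i + 1)`-polar, then for `k = t - 1 + ∑ k i`, the disjoint union of the `G i` is a
minimal `(1,k)`-polar obstruction which is `(1,k+1)`-polar. -/
theorem stmt_11 (t : ℕ) (ht : 2 ≤ t) (V : Fin t → Type*) [∀ i, Fintype (V i)]
    (G : ∀ i, SimpleGraph (V i)) (k : Fin t → ℕ)
    (hobs : ∀ i, MinOneKPolarObstruction (k i) (G i))
    (hpol : ∀ i, OneKPolar (k i + 1) (G i)) :
    MinOneKPolarObstruction (t - 1 + ∑ i, k i) (sigmaDisjUnion G) ∧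
      OneKPolar ((t - 1 + ∑ i, k i) + 1) (sigmaDisjUnion G) :=
  stmt_11_general t ht V G k hobs hpol
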